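/- Let R be a nontrivial commutative ring and G a nontrivial abelian group, and let RG be the group ring. The following are equivalent: (1) every proper ideal of RG belongs to Φ(𝔖); (2) every proper principal ideal of RG belongs to Φ(𝔖); (3) R is a field of characteristic 2 and G is a group of order 2. -/

import Mathlib

/-!
If every proper principal ideal of `R[G]` is some `Φ(N)`, then every element of nonzero
augmentation is a unit, since `Φ(N)` lies in the augmentation ideal. Hence `R` is a field, and
`a = a * b` with `b` of augmentation zero forces `a = 0`, as `1 - b` is a unit. For `p, q ≠ 1`
let `(p - 1)(q - 1)` generate `Φ(N)`; then `p, q ∉ N`, and in `R[G/N]` the product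
`(p̄ - 1)(q̄ - 1)` vanishes, which by its coefficient at `p̄` forces `p̄ = q̄` and `2 = 0`.
The pair `(g², g)` shows that every element has order two, and for `g ≠ h` the identity
`(gh - 1)(g - 1) = (g - 1)(h - 1)`, a consequence of `(g - 1)² = 0`, puts `gh` outside `N`
although `ḡ = h̄`. Conversely, if `G = {1, g}` and `2 = 0` in the field `R`, then every
`z` equals `ε(z) + z_g (g - 1)` with `(g - 1)² = 0`, so the proper ideals are `0 = Φ(1)` and
`(g - 1) = Φ(G)`.
-/

/-- `Phi R N` is the ideal of the group ring `MonoidAlgebra R G` generated by the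
elements `n - 1` with `n ∈ N`, i.e. the extension of the augmentation ideal of `RN`. -/
noncomputable def Phi (R : Type*) {G : Type*} [CommRing R] [CommGroup G] (N : Subgroup G) :
    Ideal (MonoidAlgebra R G) :=
  Ideal.span ((fun n => MonoidAlgebra.of R G n - 1) '' (N : Set G))

open MonoidAlgebra

section CommMonoid

variable {R G : Type*} [CommRing R] [CommMonoid G]

variable (R G) in
noncomputable def augmentation : MonoidAlgebra R G →ₐ[R] R := lift R R G 1

@[simp]
lemma augmentation_single (g : G) (r : R) : augmentation R G (single g r) = r := by
  simp [augmentation, lift_single]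

@[simp]
lemma augmentation_of_sub_one (g : G) : augmentation R G (of R G g - 1) = 0 := by
  simp [of_apply]

lemma span_singleton_ne_top_of_augmentation_eq_zero [Nontrivial R] {y : MonoidAlgebra R G}
    (hy : augmentation R G y = 0) : Ideal.span {y} ≠ ⊤ := by
  rw [Ne, Ideal.span_singleton_eq_top]
  intro hunit
  simpa [hy] using hunit.map (augmentation R G)

lemma mapDomainRingHom_of {H : Type*} [Monoid H] (f : G →* H) (g : G) :
    mapDomainRingHom R f (of R G g) = of R H (f g) := by
  simp [of_apply]

lemma of_sub_one_mul_self_eq_zero {g : G} (hg : g * g = 1) (h2 : (2 : R) = 0) :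
    (of R G g - 1) * (of R G g - 1) = 0 := by
  have h2' : (2 : MonoidAlgebra R G) = 0 := by
    rw [← map_ofNat (algebraMap R (MonoidAlgebra R G)) 2, h2, map_zero]
  have hof : of R G g * of R G g = 1 := by rw [← map_mul, hg, map_one]
  linear_combination hof + (1 - of R G g) * h2'

end CommMonoid

lemma eq_and_two_eq_zero_of_of_sub_one_mul_eq_zero {R G : Type*} [CommRing R] [Nontrivial R]
    [Group G] {p q : G} (hp : p ≠ 1) (hq : q ≠ 1) (h : (of R G p - 1) * (of R G q - 1) = 0) :
    p = q ∧ (2 : R) = 0 := by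
  have hcoeff := congrArg (fun z => z.coeff p) h
  have hpq : p * q ≠ p := by simpa using hq
  by_cases hqp : p = q
  · subst hqp
    simp [sub_mul, mul_sub, of_apply, one_def, hp] at hcoeff
    exact ⟨rfl, by linear_combination -hcoeff⟩
  · simp [sub_mul, mul_sub, of_apply, one_def, hp, hpq, hqp] at hcoeff

section Phi

variable {R G : Type*} [CommRing R] [CommGroup G]

lemma of_sub_one_mem_Phi {N : Subgroup G} {g : G} (hg : g ∈ N) : of R G g - 1 ∈ Phi R N :=
  Ideal.subset_span ⟨g, hg, rfl⟩

lemma Phi_le_ker_augmentation (N : Subgroup G) : Phi R N ≤ RingHom.ker (augmentation R G) := by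
  rw [Phi, Ideal.span_le]
  rintro _ ⟨n, -, rfl⟩
  simp

lemma Phi_le_ker_mapDomainRingHom (N : Subgroup G) :
    Phi R N ≤ RingHom.ker (mapDomainRingHom R (QuotientGroup.mk' N)) := by
  rw [Phi, Ideal.span_le]
  rintro _ ⟨n, hn, rfl⟩
  simp only [SetLike.mem_coe, RingHom.mem_ker, map_sub, map_one, mapDomainRingHom_of,
    QuotientGroup.mk'_apply, (QuotientGroup.eq_one_iff n).mpr hn, sub_self]

lemma Phi_bot : Phi R (⊥ : Subgroup G) = ⊥ := by
  simp [Phi, of_apply, one_def]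

end Phi

def ProperPrincipalIdealsArePhi (R G : Type*) [CommRing R] [CommGroup G] : Prop :=
  ∀ x : MonoidAlgebra R G, Ideal.span {x} ≠ ⊤ → ∃ N : Subgroup G, Ideal.span {x} = Phi R N

namespace ProperPrincipalIdealsArePhi

variable {R G : Type*} [CommRing R] [CommGroup G]

lemma isUnit_of_augmentation_ne_zero (hPhi : ProperPrincipalIdealsArePhi R G)
    {y : MonoidAlgebra R G} (hy : augmentation R G y ≠ 0) : IsUnit y := by
  by_contra hunit
  obtain ⟨N, hN⟩ := hPhi y (by rwa [Ne, Ideal.span_singleton_eq_top])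
  exact hy (Phi_le_ker_augmentation N (hN ▸ Ideal.mem_span_singleton_self y))

variable [Nontrivial R]

lemma isField (hPhi : ProperPrincipalIdealsArePhi R G) : IsField R := by
  refine ⟨exists_pair_ne R, mul_comm, fun {a} ha => ?_⟩
  obtain ⟨v, hv⟩ := isUnit_iff_exists_inv.mp
    (hPhi.isUnit_of_augmentation_ne_zero (y := single 1 a) (by simpa using ha))
  exact ⟨augmentation R G v, by simpa using congrArg (augmentation R G) hv⟩

lemma eq_zero_of_mem_span_mul (hPhi : ProperPrincipalIdealsArePhi R G)
    {a b : MonoidAlgebra R G} (hb : augmentation R G b = 0) (hab : a ∈ Ideal.span {a * b}) :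
    a = 0 := by
  obtain ⟨u, hu⟩ := Ideal.mem_span_singleton'.mp hab
  have hunit : IsUnit (1 - b * u) := hPhi.isUnit_of_augmentation_ne_zero (by simp [hb])
  exact (hunit.mul_left_eq_zero).mp (by linear_combination -hu)

lemma notMem_of_span_eq_Phi (hPhi : ProperPrincipalIdealsArePhi R G) {p : G}
    (hp : p ≠ 1) {b : MonoidAlgebra R G} (hb : augmentation R G b = 0) {N : Subgroup G}
    (hN : Ideal.span {(of R G p - 1) * b} = Phi R N) : p ∉ N := by
  intro hpN
  have hzero := hPhi.eq_zero_of_mem_span_mul hb (hN ▸ of_sub_one_mem_Phi hpN)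
  exact hp (of_injective ((sub_eq_zero.mp hzero).trans (map_one _).symm))

lemma exists_span_eq_Phi (hPhi : ProperPrincipalIdealsArePhi R G) {p q : G}
    (hp : p ≠ 1) (hq : q ≠ 1) :
    ∃ N : Subgroup G, Ideal.span {(of R G p - 1) * (of R G q - 1)} = Phi R N ∧ p ∉ N ∧
      (p : G ⧸ N) = q ∧ (2 : R) = 0 := by
  obtain ⟨N, hN⟩ := hPhi ((of R G p - 1) * (of R G q - 1))
    (span_singleton_ne_top_of_augmentation_eq_zero (by simp))
  have hpN : p ∉ N := hPhi.notMem_of_span_eq_Phi hp (augmentation_of_sub_one q) hN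
  have hqN : q ∉ N :=
    hPhi.notMem_of_span_eq_Phi hq (augmentation_of_sub_one p) (by rwa [mul_comm])
  have hker := Phi_le_ker_mapDomainRingHom N (hN ▸ Ideal.mem_span_singleton_self _)
  rw [RingHom.mem_ker, map_mul, map_sub, map_sub, map_one, mapDomainRingHom_of,
    mapDomainRingHom_of] at hker
  exact ⟨N, hN, hpN, eq_and_two_eq_zero_of_of_sub_one_mul_eq_zero
    (mt (QuotientGroup.eq_one_iff p).mp hpN) (mt (QuotientGroup.eq_one_iff q).mp hqN) hker⟩

lemma two_eq_zero [Nontrivial G] (hPhi : ProperPrincipalIdealsArePhi R G) :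
    (2 : R) = 0 := by
  obtain ⟨g, hg⟩ := exists_ne (1 : G)
  obtain ⟨N, -, -, -, h2⟩ := hPhi.exists_span_eq_Phi hg hg
  exact h2

lemma mul_self_eq_one (hPhi : ProperPrincipalIdealsArePhi R G) {g : G} (hg : g ≠ 1) :
    g * g = 1 := by
  by_contra hgg
  obtain ⟨N, -, hggN, heq, -⟩ := hPhi.exists_span_eq_Phi hgg hg
  have : (g : G ⧸ N) = 1 := by simpa using heq
  exact hggN ((QuotientGroup.eq_one_iff _).mp (by simp [this]))

lemma eq_of_ne_one (hPhi : ProperPrincipalIdealsArePhi R G) {g h : G} (hg : g ≠ 1)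
    (hh : h ≠ 1) : g = h := by
  by_contra hgh
  have hg2 := hPhi.mul_self_eq_one hg
  obtain ⟨N, hN, -, heq, h2⟩ := hPhi.exists_span_eq_Phi hg hh
  have hghN : g * h ∈ N := by
    rwa [QuotientGroup.eq, inv_eq_of_mul_eq_one_right hg2] at heq
  have hgh1 : g * h ≠ 1 := fun h1 => hgh (by
    rw [← inv_eq_of_mul_eq_one_right hg2, inv_eq_of_mul_eq_one_right h1])
  have hmul : (of R G (g * h) - 1) * (of R G g - 1) = (of R G g - 1) * (of R G h - 1) := by
    rw [map_mul]
    linear_combination of R G h * of_sub_one_mul_self_eq_zero hg2 h2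
  exact hPhi.notMem_of_span_eq_Phi hgh1 (augmentation_of_sub_one g) (hmul ▸ hN) hghN

lemma card_eq_two [Nontrivial G] (hPhi : ProperPrincipalIdealsArePhi R G) :
    Nat.card G = 2 := by
  obtain ⟨g, hg⟩ := exists_ne (1 : G)
  exact (Nat.card_eq_two_iff' 1).mpr ⟨g, hg, fun h hh => hPhi.eq_of_ne_one hh hg⟩

end ProperPrincipalIdealsArePhi

section GroupOfOrderTwo

variable {R G : Type*} [CommRing R] [CommGroup G] {g : G}

lemma eq_algebraMap_add_mul_of_sub_one (hG : ∀ c : G, c = 1 ∨ c = g) (hg : g ≠ 1)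
    (z : MonoidAlgebra R G) :
    z = algebraMap R _ (augmentation R G z) + algebraMap R _ (z.coeff g) * (of R G g - 1) := by
  induction z using MonoidAlgebra.induction_linear with
  | zero => simp
  | add z w hz hw =>
    rw [coeff_add, Finsupp.add_apply, map_add, map_add, map_add]
    linear_combination hz + hw
  | single c r =>
    rcases hG c with rfl | rfl
    · simp [hg.symm]
    · simp [of_apply, mul_sub, single_mul_single]

lemma mul_self_eq_one_of_forall_eq_one_or_eq (hG : ∀ c : G, c = 1 ∨ c = g) (hg : g ≠ 1) :
    g * g = 1 :=
  (hG (g * g)).resolve_right (fun h => hg (by simpa using h))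

lemma isUnit_of_augmentation_ne_zero_of_forall_eq_one_or_eq (hR : IsField R) (h2 : (2 : R) = 0)
    (hG : ∀ c : G, c = 1 ∨ c = g) (hg : g ≠ 1) {z : MonoidAlgebra R G}
    (hz : augmentation R G z ≠ 0) : IsUnit z := by
  obtain ⟨c, hc⟩ := hR.mul_inv_cancel hz
  have hnil : IsNilpotent (algebraMap R _ (z.coeff g) * (of R G g - 1)) :=
    ⟨2, by rw [mul_pow, sq (of R G g - 1),
      of_sub_one_mul_self_eq_zero (mul_self_eq_one_of_forall_eq_one_or_eq hG hg) h2, mul_zero]⟩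
  rw [eq_algebraMap_add_mul_of_sub_one hG hg z]
  exact hnil.isUnit_add_left_of_commute ((IsUnit.of_mul_eq_one _ hc).map _) (Commute.all _ _)

lemma Ideal.eq_bot_or_eq_span_of_sub_one (hR : IsField R) (h2 : (2 : R) = 0)
    (hG : ∀ c : G, c = 1 ∨ c = g) (hg : g ≠ 1) {J : Ideal (MonoidAlgebra R G)}
    (hJ : J ≠ ⊤) :
    J = ⊥ ∨ J = Ideal.span {of R G g - 1} := by
  have hmul : ∀ z ∈ J, z = algebraMap R _ (z.coeff g) * (of R G g - 1) := fun z hz => by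
    by_contra hne
    refine hJ (J.eq_top_of_isUnit_mem hz
      (isUnit_of_augmentation_ne_zero_of_forall_eq_one_or_eq hR h2 hG hg fun hε => hne ?_))
    conv_lhs => rw [eq_algebraMap_add_mul_of_sub_one hG hg z, hε, map_zero, zero_add]
  refine (eq_or_ne J ⊥).imp id fun hbot => le_antisymm ?_ ?_
  · exact fun z hz => hmul z hz ▸ Ideal.mul_mem_left _ _ (Ideal.mem_span_singleton_self _)
  · obtain ⟨z, hzJ, hz0⟩ := Submodule.exists_mem_ne_zero_of_ne_bot hbot
    have hb : z.coeff g ≠ 0 := fun hb => hz0 (by rw [hmul z hzJ, hb, map_zero, zero_mul])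
    obtain ⟨c, hc⟩ := hR.mul_inv_cancel hb
    rw [Ideal.span_singleton_le_iff_mem]
    convert J.mul_mem_left (algebraMap R _ c) hzJ using 1
    rw [hmul z hzJ, ← mul_assoc, ← map_mul, mul_comm c, hc, map_one, one_mul]

lemma Phi_top_eq_span_of_sub_one (hG : ∀ c : G, c = 1 ∨ c = g) :
    Phi R (⊤ : Subgroup G) = Ideal.span {of R G g - 1} := by
  have : (Set.univ : Set G) = {1, g} := Set.ext fun c => by simpa using hG c
  rw [Phi, Subgroup.coe_top, this, Set.image_pair, map_one, sub_self, Ideal.span_insert_zero]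

end GroupOfOrderTwo

lemma forall_ideal_eq_Phi_of_card_eq_two {R G : Type*} [CommRing R] [CommGroup G]
    (hR : IsField R) (h2 : (2 : R) = 0) (hcard : Nat.card G = 2) :
    ∀ J : Ideal (MonoidAlgebra R G), J ≠ ⊤ → ∃ N : Subgroup G, J = Phi R N := by
  obtain ⟨g, hg, hne⟩ := (Nat.card_eq_two_iff' (1 : G)).mp hcard
  have hG : ∀ c : G, c = 1 ∨ c = g := fun c => (em (c = 1)).imp_right (hne c)
  intro J hJ
  rcases Ideal.eq_bot_or_eq_span_of_sub_one hR h2 hG hg hJ with rfl | rfl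
  · exact ⟨⊥, Phi_bot.symm⟩
  · exact ⟨⊤, (Phi_top_eq_span_of_sub_one hG).symm⟩

theorem stmt12 (R G : Type*) [CommRing R] [Nontrivial R] [CommGroup G] [Nontrivial G] :
    List.TFAE [
      ∀ J : Ideal (MonoidAlgebra R G), J ≠ ⊤ → ∃ N : Subgroup G, J = Phi R N,
      ∀ x : MonoidAlgebra R G, Ideal.span {x} ≠ ⊤ →
        ∃ N : Subgroup G, Ideal.span {x} = Phi R N,
      IsField R ∧ CharP R 2 ∧ Nat.card G = 2] := by
  tfae_have 1 → 2 := fun h x hx => h _ hx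
  tfae_have 2 → 3 := fun (h : ProperPrincipalIdealsArePhi R G) =>
    ⟨h.isField, CharTwo.of_one_ne_zero_of_two_eq_zero one_ne_zero h.two_eq_zero, h.card_eq_two⟩
  tfae_have 3 → 1 := fun ⟨hR, _, hcard⟩ =>
    forall_ideal_eq_Phi_of_card_eq_two hR CharTwo.two_eq_zero hcard
  tfae_finish
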